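/- Let G = (V,E) be a finite simple graph, let E_c ⊆ E, let c denote the number of connected components of the spanning subgraph (V, E_c), and let k ≥ 1 be an integer. Then there exists a set E* ⊆ E ∖ E_c with |E*| ≤ k·c such that for every nonempty proper vertex set S ⊆ V satisfying ∂S ∩ E_c = ∅ and |∂S| ≤ k, every edge of ∂S belongs to E*. -/

import Mathlib

open Classical

noncomputable section

/-- The edge set of `G` as a `Finset` of `Sym2 V`. -/
def edgeFin {V : Type*} [Fintype V] (G : SimpleGraph V) : Finset (Sym2 V) :=
  Finset.univ.filter (fun e => e ∈ G.edgeSet)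

/-- The set of edges of `G` with exactly one endpoint in `S` (the cut `(S, V ∖ S)`). -/
def cutEdges {V : Type*} [Fintype V] (G : SimpleGraph V) (S : Finset V) : Finset (Sym2 V) :=
  Finset.univ.filter (fun e => e ∈ G.edgeSet ∧ ∃ u v, e = s(u, v) ∧ u ∈ S ∧ v ∉ S)

/-- The probability, under independent `Bernoulli(p)` sampling of each element of the
ground set `E`, that the sampled subset satisfies `Q`. -/
def cubePr {β : Type*} [DecidableEq β] (E : Finset β) (p : ℝ) (Q : Finset β → Prop) : ℝ :=
  ∑ S ∈ E.powerset, p ^ S.card * (1 - p) ^ (E.card - S.card) * (if Q S then 1 else 0)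

/-- `C` is (the vertex set of) a connected component of `H`. -/
def IsCompOf {V : Type*} [Fintype V] (H : SimpleGraph V) (C : Finset V) : Prop :=
  ∃ v : V, C = Finset.univ.filter (fun u => H.Reachable v u)

/-!
Contract `E_c` and pick, in `k` successive rounds, a spanning forest `F_i` of the edges of
`E ∖ E_c` not chosen in earlier rounds; each `F_i` has at most `c` edges, since every edge of
it merges two components of `E_c ∪ F_1 ∪ ⋯`. If an edge `f` of a cut `∂S` avoiding `E_c` is
never chosen, then in every round the endpoints of `f` are joined in `E_c ∪ F_i`, so `F_i`
contains an edge of `∂S`. Hence `∂S` contains `f` and one edge from each `F_i`: `|∂S| > k`.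
-/

open SimpleGraph Finset

section

variable {V : Type*}

theorem SimpleGraph.ConnectedComponent.card_lt_card_of_le_of_reachable [Finite V]
    {G G' : SimpleGraph V} (h : G ≤ G') {u v : V} (huv : ¬G.Reachable u v)
    (huv' : G'.Reachable u v) :
    Nat.card G'.ConnectedComponent < Nat.card G.ConnectedComponent := by
  have := Fintype.ofFinite G.ConnectedComponent
  have := Fintype.ofFinite G'.ConnectedComponent
  simp only [Nat.card_eq_fintype_card]
  refine Fintype.card_lt_of_surjective_not_injective _ (surjective_map_ofLE h) fun hinj => ?_
  refine huv (ConnectedComponent.eq.mp (hinj ?_))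
  rw [ConnectedComponent.map_mk, ConnectedComponent.map_mk]
  exact ConnectedComponent.sound huv'

theorem SimpleGraph.Reachable.exists_adj_of_mem_of_notMem {G : SimpleGraph V} {S : Set V}
    {u v : V} (h : G.Reachable u v) (hu : u ∈ S) (hv : v ∉ S) :
    ∃ x ∈ S, ∃ y ∉ S, G.Adj x y := by
  obtain ⟨p⟩ := h
  obtain ⟨d, -, hx, hy⟩ := p.exists_boundary_dart S hu hv
  exact ⟨d.fst, hx, d.snd, hy, d.adj⟩

/-- A relative spanning forest: `F` is chosen of maximal size subject to
`#components(B ∪ F) + |F| ≤ #components(B)`, so no edge of `A` can be added to it. -/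
theorem exists_subset_card_le_forall_reachable [Finite V] (B A : Finset (Sym2 V)) :
    ∃ F ⊆ A, F.card ≤ Nat.card (fromEdgeSet (B : Set (Sym2 V))).ConnectedComponent ∧
      ∀ u v, s(u, v) ∈ A →
        (fromEdgeSet ((B ∪ F : Finset (Sym2 V)) : Set (Sym2 V))).Reachable u v := by
  set κ : Finset (Sym2 V) → ℕ := fun F =>
    Nat.card (fromEdgeSet ((B ∪ F : Finset (Sym2 V)) : Set (Sym2 V))).ConnectedComponent with hκ
  have hκ_empty : κ ∅ = Nat.card (fromEdgeSet (B : Set (Sym2 V))).ConnectedComponent := by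
    simp only [hκ, union_empty]
  obtain ⟨F, hF, hmax⟩ :=
    (A.powerset.filter fun F => κ F + F.card ≤ κ ∅).exists_max_image card ⟨∅, by simp⟩
  obtain ⟨hFA, hFκ⟩ := mem_filter.mp hF
  refine ⟨F, mem_powerset.mp hFA, by omega, fun u v huv => ?_⟩
  by_contra hnr
  have hne : u ≠ v := by rintro rfl; exact hnr Reachable.rfl
  have adj_of_mem {F' : Finset (Sym2 V)} (h : s(u, v) ∈ F') :
      (fromEdgeSet ((B ∪ F' : Finset (Sym2 V)) : Set (Sym2 V))).Adj u v :=
    (fromEdgeSet_adj _).mpr ⟨by simp [h], hne⟩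
  have hnot : s(u, v) ∉ F := fun h => hnr (adj_of_mem h).reachable
  have hlt : κ (insert s(u, v) F) < κ F :=
    ConnectedComponent.card_lt_card_of_le_of_reachable
      (fromEdgeSet_mono (by simp [Set.subset_insert])) hnr
      (adj_of_mem (mem_insert_self _ _)).reachable
  have hle := hmax (insert s(u, v) F) <| mem_filter.mpr
    ⟨mem_powerset.mpr (insert_subset huv (mem_powerset.mp hFA)), by
      rw [card_insert_of_notMem hnot]; omega⟩
  rw [card_insert_of_notMem hnot] at hle
  omega

section Cuts

variable [Fintype V] {G : SimpleGraph V}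

theorem mem_edgeFin {e : Sym2 V} : e ∈ edgeFin G ↔ e ∈ G.edgeSet := by
  simp [edgeFin]

theorem inter_cutEdges_nonempty_of_reachable {A : Finset (Sym2 V)} (hA : A ⊆ edgeFin G)
    {S : Finset V} {u v : V} (hu : u ∈ S) (hv : v ∉ S)
    (h : (fromEdgeSet (A : Set (Sym2 V))).Reachable u v) : (cutEdges G S ∩ A).Nonempty := by
  obtain ⟨x, hx, y, hy, hxy⟩ := h.exists_adj_of_mem_of_notMem (S := (S : Set V)) hu hv
  have hxyA : s(x, y) ∈ A := by exact_mod_cast ((fromEdgeSet_adj _).mp hxy).1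
  refine ⟨s(x, y), mem_inter.mpr ⟨?_, hxyA⟩⟩
  exact mem_filter.mpr ⟨mem_univ _, mem_edgeFin.mp (hA hxyA), x, y, rfl, hx, hy⟩

theorem exists_subset_card_le_mul_forall_le_card_inter_cutEdges (Ec : Finset (Sym2 V))
    (hEc : Ec ⊆ edgeFin G) (n : ℕ) :
    ∃ E ⊆ edgeFin G \ Ec,
      E.card ≤ n * Nat.card (fromEdgeSet (Ec : Set (Sym2 V))).ConnectedComponent ∧
      ∀ S : Finset V, cutEdges G S ∩ Ec = ∅ → ∀ f ∈ cutEdges G S, f ∉ E →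
        n ≤ (cutEdges G S ∩ E).card := by
  induction n with
  | zero => exact ⟨∅, empty_subset _, by simp, fun _ _ _ _ _ => Nat.zero_le _⟩
  | succ n ih =>
    obtain ⟨E, hE, hEcard, hEcut⟩ := ih
    obtain ⟨F, hF, hFcard, hFreach⟩ :=
      exists_subset_card_le_forall_reachable Ec ((edgeFin G \ Ec) \ E)
    refine ⟨E ∪ F, union_subset hE (hF.trans sdiff_subset),
      (card_union_le _ _).trans (by rw [Nat.succ_mul]; omega), fun S hS f hf hfEF => ?_⟩
    have hSEc : Disjoint (cutEdges G S) Ec := disjoint_iff_inter_eq_empty.mpr hS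
    obtain ⟨-, hfG, u, v, rfl, hu, hv⟩ := mem_filter.mp hf
    have hfEc : s(u, v) ∉ Ec := disjoint_left.mp hSEc hf
    have hfE : s(u, v) ∉ E := fun h => hfEF (mem_union_left _ h)
    obtain ⟨e, he⟩ := inter_cutEdges_nonempty_of_reachable
      (union_subset hEc (hF.trans (sdiff_subset.trans sdiff_subset))) hu hv
      (hFreach u v (by simp [mem_edgeFin, hfG, hfEc, hfE]))
    obtain ⟨heS, heEcF⟩ := mem_inter.mp he
    have heF : e ∈ F := (mem_union.mp heEcF).resolve_left (disjoint_left.mp hSEc heS)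
    have heE : e ∉ E := (mem_sdiff.mp (hF heF)).2
    calc n + 1 ≤ (insert e (cutEdges G S ∩ E)).card := by
          rw [card_insert_of_notMem fun h => heE (mem_inter.mp h).2]
          exact Nat.succ_le_succ (hEcut S hS _ hf hfE)
      _ ≤ (cutEdges G S ∩ (E ∪ F)).card := by
          refine card_le_card (insert_subset (mem_inter.mpr ⟨heS, mem_union_right _ heF⟩) ?_)
          exact inter_subset_inter_left subset_union_left

end Cuts

end

theorem statement10_general {V : Type*} [Fintype V] (G : SimpleGraph V)
    (Ec : Finset (Sym2 V)) (hEc : Ec ⊆ edgeFin G)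
    (c : ℕ)
    (hc : c = Nat.card (SimpleGraph.fromEdgeSet (↑Ec : Set (Sym2 V))).ConnectedComponent)
    (k : ℕ) :
    ∃ Estar : Finset (Sym2 V), Estar ⊆ edgeFin G \ Ec ∧ Estar.card ≤ k * c ∧
      ∀ S : Finset V, S.Nonempty → S ≠ Finset.univ →
        cutEdges G S ∩ Ec = ∅ → (cutEdges G S).card ≤ k →
        cutEdges G S ⊆ Estar := by
  obtain ⟨E, hE, hEcard, hEcut⟩ :=
    exists_subset_card_le_mul_forall_le_card_inter_cutEdges Ec hEc k
  refine ⟨E, hE, hc ▸ hEcard, fun S _ _ hS hScard f hf => ?_⟩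
  by_contra hfE
  have hlt : (cutEdges G S ∩ E).card < (cutEdges G S).card :=
    card_lt_card ⟨inter_subset_left, fun h => hfE (mem_inter.mp (h hf)).2⟩
  have := hEcut S hS f hf hfE
  omega

/-- Generalized sparse certificates: if `(V, E_c)` has `c` connected
components, there is `E* ⊆ E ∖ E_c` with `|E*| ≤ k·c` containing every edge of every
cut `∂S` with `∂S ∩ E_c = ∅` and `|∂S| ≤ k`. -/
theorem statement10 {V : Type*} [Fintype V] (G : SimpleGraph V)
    (Ec : Finset (Sym2 V)) (hEc : Ec ⊆ edgeFin G)
    (c : ℕ)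
    (hc : c = Nat.card (SimpleGraph.fromEdgeSet (↑Ec : Set (Sym2 V))).ConnectedComponent)
    (k : ℕ) (hk : 1 ≤ k) :
    ∃ Estar : Finset (Sym2 V), Estar ⊆ edgeFin G \ Ec ∧ Estar.card ≤ k * c ∧
      ∀ S : Finset V, S.Nonempty → S ≠ Finset.univ →
        cutEdges G S ∩ Ec = ∅ → (cutEdges G S).card ≤ k →
        cutEdges G S ⊆ Estar :=
  statement10_general G Ec hEc c hc k
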